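/- arXiv:cond-mat/0203607 — 6 statements merged into one kernel-verified Lean document; each statement's English description precedes it below -/
import Mathlib

section
/- For a finite sample X_1,...,X_N of real numbers, α ∈ (0,1], and κ = ⌊Nα⌋ ≥ 1, the function ψ ↦ -ψ + (1/κ)·∑_{i=1}^N max(ψ - X_i, 0) achieves its minimum over ℝ, and the minimum value equals -(1/κ)·∑_{i=1}^κ X_{i:N}, where X_{1:N} ≤ ... ≤ X_{N:N} is the sorted sample. -/
open Finset

lemma filter_lt_card_eq (N κ : ℕ) (h : κ ≤ N) :
    (univ.filter (fun i : Fin N => (i : ℕ) < κ)).card = κ := by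
  have : univ.filter (fun i : Fin N => (i : ℕ) < κ) = univ.map (Fin.castLEEmb h) := by
    ext i
    simp only [mem_filter, mem_univ, true_and, mem_map]
    constructor
    · intro hi; exact ⟨⟨i, hi⟩, rfl⟩
    · rintro ⟨j, rfl⟩; exact j.2
  rw [this, card_map, card_univ, Fintype.card_fin]

/-- Minimization of the Pflug–Rockafellar–Uryasev function for empirical
Expected Shortfall: the minimum is attained and equals the empirical ES. -/
theorem stmt_0 (N : ℕ) (X : Fin N → ℝ) (α : ℝ) (hα0 : 0 < α) (hα1 : α ≤ 1)
    (κ : ℕ) (hκdef : κ = ⌊(N : ℝ) * α⌋₊) (hκ : 1 ≤ κ) :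
    IsLeast (Set.range fun ψ : ℝ => -ψ + (1 / (κ : ℝ)) * ∑ i, max (ψ - X i) 0)
      (-(1 / (κ : ℝ)) *
        ∑ i ∈ univ.filter (fun i : Fin N => (i : ℕ) < κ), (X ∘ Tuple.sort X) i) := by
  set Y : Fin N → ℝ := X ∘ Tuple.sort X with hY
  have hmono : Monotone Y := Tuple.monotone_sort X
  have hκN : κ ≤ N := by
    rw [hκdef]
    calc ⌊(N : ℝ) * α⌋₊ ≤ ⌊(N : ℝ)⌋₊ := by
          apply Nat.floor_le_floor
          nlinarith [Nat.cast_nonneg (α := ℝ) N]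
      _ = N := Nat.floor_natCast N
  have hκR : (0 : ℝ) < κ := by exact_mod_cast hκ
  set S : Finset (Fin N) := univ.filter (fun i : Fin N => (i : ℕ) < κ) with hS
  have hScard : S.card = κ := filter_lt_card_eq N κ hκN
  have hsum : ∀ ψ : ℝ, ∑ i, max (ψ - X i) 0 = ∑ i, max (ψ - Y i) 0 := fun ψ =>
    (Equiv.sum_comp (Tuple.sort X) (fun i => max (ψ - X i) 0)).symm
  -- lower bound for the inner sum
  have hlb : ∀ ψ : ℝ, (κ : ℝ) * ψ - ∑ i ∈ S, Y i ≤ ∑ i, max (ψ - Y i) 0 := by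
    intro ψ
    have h1 : ∑ i ∈ S, (ψ - Y i) ≤ ∑ i ∈ S, max (ψ - Y i) 0 :=
      Finset.sum_le_sum fun i _ => le_max_left _ _
    have h2 : ∑ i ∈ S, max (ψ - Y i) 0 ≤ ∑ i, max (ψ - Y i) 0 :=
      Finset.sum_le_sum_of_subset_of_nonneg (subset_univ S)
        (fun i _ _ => le_max_right _ _)
    have h3 : ∑ i ∈ S, (ψ - Y i) = (κ : ℝ) * ψ - ∑ i ∈ S, Y i := by
      rw [Finset.sum_sub_distrib, Finset.sum_const, hScard, nsmul_eq_mul]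
    linarith
  constructor
  · -- the minimum is attained at ψ* = Y ⟨κ-1⟩
    have hj : κ - 1 < N := lt_of_lt_of_le (Nat.sub_lt hκ one_pos) hκN
    set j : Fin N := ⟨κ - 1, hj⟩ with hjdef
    refine ⟨Y j, ?_⟩
    have hsplit : ∑ i, max (Y j - Y i) 0 = ∑ i ∈ S, (Y j - Y i) := by
      rw [← Finset.sum_filter_add_sum_filter_not univ (fun i : Fin N => (i : ℕ) < κ)
        (fun i => max (Y j - Y i) 0)]
      have hA : ∑ i ∈ S, max (Y j - Y i) 0 = ∑ i ∈ S, (Y j - Y i) := by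
        apply Finset.sum_congr rfl
        intro i hi
        rw [hS, mem_filter] at hi
        have : i ≤ j := by
          rw [hjdef]
          exact Fin.mk_le_of_le_val (Nat.le_sub_one_of_lt hi.2)
        have := hmono this
        simp [max_eq_left, sub_nonneg.mpr this]
      have hB : ∑ i ∈ univ.filter (fun i : Fin N => ¬(i : ℕ) < κ), max (Y j - Y i) 0 = 0 := by
        apply Finset.sum_eq_zero
        intro i hi
        rw [mem_filter] at hi
        have : j ≤ i := by
          rw [hjdef]
          exact Fin.mk_le_of_le_val (le_trans (Nat.sub_le κ 1) (not_lt.mp hi.2))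
        have := hmono this
        simp [max_eq_right, sub_nonpos.mpr this]
      rw [hA, hB, add_zero]
    have h3 : ∑ i ∈ S, (Y j - Y i) = (κ : ℝ) * Y j - ∑ i ∈ S, Y i := by
      rw [Finset.sum_sub_distrib, Finset.sum_const, hScard, nsmul_eq_mul]
    show -Y j + (1 / (κ : ℝ)) * ∑ i, max (Y j - X i) 0 = _
    rw [hsum, hsplit, h3]
    field_simp
    ring
  · rintro v ⟨ψ, rfl⟩
    simp only
    rw [hsum]
    have := hlb ψ
    have h4 : -ψ + (1 / (κ : ℝ)) * ((κ : ℝ) * ψ - ∑ i ∈ S, Y i) =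
        -(1 / (κ : ℝ)) * ∑ i ∈ S, Y i := by
      field_simp
      ring
    have h5 : -ψ + (1 / (κ : ℝ)) * ((κ : ℝ) * ψ - ∑ i ∈ S, Y i) ≤
        -ψ + (1 / (κ : ℝ)) * ∑ i, max (ψ - Y i) 0 := by
      have : (0 : ℝ) < 1 / κ := by positivity
      nlinarith
    linarith [h4 ▸ h5]
end

section
/- Let X be an integrable real random variable and α ∈ (0,1). Then inf_{ψ∈ℝ} ( -ψ + (1/α)·E[max(ψ - X, 0)] ) = -(1/α)·∫_0^α F_X^←(p) dp, i.e., the infimum of the Pflug–Rockafellar–Uryasev function equals the Expected Shortfall ES_α(X). -/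
open MeasureTheory ProbabilityTheory Set Filter Topology

/-!
Write `F` for the distribution function of `X` and `q = F^←`. By Tonelli, both
`E[(ψ - X)⁺]` and `∫_0^α (ψ - q p)⁺ dp` are integrals over `t < ψ` of the measure of a
sublevel set, namely `∫_{t<ψ} F t dt` and `∫_{t<ψ} min(α, F t) dt`, the latter because
`q p ≤ t ↔ p ≤ F t`. Hence `ψ α - ∫_0^α q ≤ ∫_0^α (ψ - q)⁺ ≤ E[(ψ - X)⁺]` for every `ψ`,
and both inequalities are equalities at `ψ = q α`, since `q ≤ q α` on `(0, α]` and
`F t < α` for `t < q α`.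
-/

section LayerCake

variable {S : Type*} [MeasurableSpace S] (m : Measure S)

theorem lintegral_ofReal_sub_eq_setLIntegral_measure_le [SFinite m] {f : S → ℝ}
    (hf : AEMeasurable f m) (ψ : ℝ) :
    ∫⁻ x, ENNReal.ofReal (ψ - f x) ∂m = ∫⁻ t in Iio ψ, m {x | f x ≤ t} := by
  obtain ⟨g, hg, hfg⟩ : ∃ g, Measurable g ∧ f =ᵐ[m] g := ⟨hf.mk f, hf.measurable_mk, hf.ae_eq_mk⟩
  set s : Set (S × ℝ) := {z | g z.1 ≤ z.2 ∧ z.2 < ψ}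
  have hs : MeasurableSet s :=
    (measurableSet_le (hg.comp measurable_fst) measurable_snd).inter
      (measurableSet_lt measurable_snd measurable_const)
  calc ∫⁻ x, ENNReal.ofReal (ψ - f x) ∂m
      = ∫⁻ x, volume (Prod.mk x ⁻¹' s) ∂m := by
        refine lintegral_congr_ae (hfg.mono fun x hx => ?_)
        have hslice : Prod.mk x ⁻¹' s = Ico (g x) ψ := rfl
        simp only [hslice, Real.volume_Ico, hx]
    _ = m.prod volume s := (Measure.prod_apply hs).symm
    _ = ∫⁻ t, m ((fun x => (x, t)) ⁻¹' s) := Measure.prod_apply_symm hs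
    _ = ∫⁻ t, (Iio ψ).indicator (fun t => m {x | f x ≤ t}) t := by
        refine lintegral_congr fun t => ?_
        by_cases ht : t < ψ
        · rw [indicator_of_mem (mem_Iio.2 ht)]
          refine measure_congr (hfg.mono fun x hx => ?_)
          change (g x ≤ t ∧ t < ψ) = (f x ≤ t)
          simp [ht, hx]
        · rw [indicator_of_notMem (notMem_Iio.2 (not_lt.1 ht))]
          simp [s, ht]
    _ = ∫⁻ t in Iio ψ, m {x | f x ≤ t} := lintegral_indicator measurableSet_Iio _

theorem integral_max_sub_zero_eq_toReal {f : S → ℝ} (hf : AEMeasurable f m) (ψ : ℝ) :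
    ∫ x, max (ψ - f x) 0 ∂m = (∫⁻ x, ENNReal.ofReal (ψ - f x) ∂m).toReal := by
  rw [integral_eq_lintegral_of_nonneg_ae (f := fun x => max (ψ - f x) 0)
    (ae_of_all _ fun _ => le_max_right _ _) (by fun_prop)]
  simp

end LayerCake

namespace ProbabilityTheory

/-- The paper's `F^←` for `F = cdf ν`; a junk value outside `(0, 1)`. -/
noncomputable def lowerQuantile (ν : Measure ℝ) (p : ℝ) : ℝ := sInf {x | p ≤ cdf ν x}

variable {ν : Measure ℝ} {p α : ℝ}

lemma nonempty_setOf_le_cdf (hp : p < 1) : {x | p ≤ cdf ν x}.Nonempty :=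
  ((tendsto_cdf_atTop (μ := ν)).eventually (eventually_ge_nhds hp)).exists

lemma bddBelow_setOf_le_cdf (hp : 0 < p) : BddBelow {x | p ≤ cdf ν x} := by
  obtain ⟨x₀, hx₀⟩ := ((tendsto_cdf_atBot (μ := ν)).eventually (eventually_lt_nhds hp)).exists
  refine ⟨x₀, fun y hy => le_of_not_gt fun hyx => ?_⟩
  exact (hy.trans (monotone_cdf ν hyx.le)).not_gt hx₀

lemma le_cdf_lowerQuantile (hp₁ : p < 1) : p ≤ cdf ν (lowerQuantile ν p) := by
  have hright : Tendsto (cdf ν) (𝓝[>] lowerQuantile ν p) (𝓝 (cdf ν (lowerQuantile ν p))) :=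
    ((cdf ν).right_continuous _).mono Ioi_subset_Ici_self
  refine ge_of_tendsto hright (eventually_nhdsWithin_of_forall fun x hx => ?_)
  obtain ⟨y, hy, hyx⟩ := exists_lt_of_csInf_lt (nonempty_setOf_le_cdf hp₁) hx
  exact hy.trans (monotone_cdf ν hyx.le)

lemma lowerQuantile_le_iff (hp₀ : 0 < p) (hp₁ : p < 1) (t : ℝ) :
    lowerQuantile ν p ≤ t ↔ p ≤ cdf ν t :=
  ⟨fun h => (le_cdf_lowerQuantile hp₁).trans (monotone_cdf ν h),
    fun h => csInf_le (bddBelow_setOf_le_cdf hp₀) h⟩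

lemma monotoneOn_lowerQuantile : MonotoneOn (lowerQuantile ν) (Ioo 0 1) :=
  fun _ hp _ hp' hpp' =>
    (lowerQuantile_le_iff hp.1 hp.2 _).2 (hpp'.trans (le_cdf_lowerQuantile hp'.2))

lemma lowerQuantile_le_lowerQuantile_of_mem_Ioc (hα : α < 1) (hp : p ∈ Ioc 0 α) :
    lowerQuantile ν p ≤ lowerQuantile ν α :=
  monotoneOn_lowerQuantile ⟨hp.1, hp.2.trans_lt hα⟩ ⟨hp.1.trans_le hp.2, hα⟩ hp.2

lemma setOf_lowerQuantile_le_inter_Ioc (hα : α < 1) (t : ℝ) :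
    {p | lowerQuantile ν p ≤ t} ∩ Ioc 0 α = Ioc 0 (min α (cdf ν t)) := by
  ext p
  simp only [mem_inter_iff, mem_ofPred_eq, mem_Ioc, le_min_iff]
  constructor
  · rintro ⟨h, hp₀, hpα⟩
    exact ⟨hp₀, hpα, (lowerQuantile_le_iff hp₀ (hpα.trans_lt hα) t).1 h⟩
  · rintro ⟨hp₀, hpα, hp⟩
    exact ⟨(lowerQuantile_le_iff hp₀ (hpα.trans_lt hα) t).2 hp, hp₀, hpα⟩

lemma aemeasurable_lowerQuantile (hα : α < 1) :
    AEMeasurable (lowerQuantile ν) (volume.restrict (Ioc 0 α)) :=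
  aemeasurable_restrict_of_monotoneOn measurableSet_Ioc
    (monotoneOn_lowerQuantile.mono fun _ hp => ⟨hp.1, hp.2.trans_lt hα⟩)

lemma setLIntegral_ofReal_sub_lowerQuantile_eq_setLIntegral_min_cdf (hα : α < 1) (ψ : ℝ) :
    ∫⁻ p in Ioc 0 α, ENNReal.ofReal (ψ - lowerQuantile ν p)
      = ∫⁻ t in Iio ψ, ENNReal.ofReal (min α (cdf ν t)) := by
  rw [lintegral_ofReal_sub_eq_setLIntegral_measure_le _ (aemeasurable_lowerQuantile hα)]
  refine lintegral_congr fun t => ?_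
  rw [Measure.restrict_apply' measurableSet_Ioc, setOf_lowerQuantile_le_inter_Ioc hα,
    Real.volume_Ioc, sub_zero]

variable [IsProbabilityMeasure ν]

lemma lintegral_ofReal_sub_eq_setLIntegral_cdf (ψ : ℝ) :
    ∫⁻ x, ENNReal.ofReal (ψ - x) ∂ν = ∫⁻ t in Iio ψ, ENNReal.ofReal (cdf ν t) := by
  rw [lintegral_ofReal_sub_eq_setLIntegral_measure_le ν aemeasurable_id' ψ]
  simp_rw [ofReal_cdf]
  rfl

lemma setLIntegral_ofReal_sub_lowerQuantile_le (hα : α < 1) (ψ : ℝ) :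
    ∫⁻ p in Ioc 0 α, ENNReal.ofReal (ψ - lowerQuantile ν p)
      ≤ ∫⁻ x, ENNReal.ofReal (ψ - x) ∂ν := by
  rw [setLIntegral_ofReal_sub_lowerQuantile_eq_setLIntegral_min_cdf hα,
    lintegral_ofReal_sub_eq_setLIntegral_cdf]
  exact lintegral_mono fun t => ENNReal.ofReal_le_ofReal (min_le_right _ _)

lemma setLIntegral_ofReal_lowerQuantile_sub_eq (hα : α ∈ Ioo 0 1) :
    ∫⁻ p in Ioc 0 α, ENNReal.ofReal (lowerQuantile ν α - lowerQuantile ν p)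
      = ∫⁻ x, ENNReal.ofReal (lowerQuantile ν α - x) ∂ν := by
  rw [setLIntegral_ofReal_sub_lowerQuantile_eq_setLIntegral_min_cdf hα.2,
    lintegral_ofReal_sub_eq_setLIntegral_cdf]
  refine setLIntegral_congr_fun measurableSet_Iio fun t (ht : t < _) => ?_
  have hcdf : cdf ν t < α := not_le.1 fun h => ht.not_ge ((lowerQuantile_le_iff hα.1 hα.2 t).2 h)
  rw [min_eq_right hcdf.le]

lemma integrableOn_lowerQuantile (hν : Integrable id ν) (hα : α ∈ Ioo 0 1) :
    IntegrableOn (lowerQuantile ν) (Ioc 0 α) := by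
  have hsub : IntegrableOn (fun p => lowerQuantile ν α - lowerQuantile ν p) (Ioc 0 α) := by
    refine (lintegral_ofReal_ne_top_iff_integrable
      (aemeasurable_const.sub (aemeasurable_lowerQuantile hα.2)).aestronglyMeasurable
      ((ae_restrict_iff' measurableSet_Ioc).2 (ae_of_all _ fun p hp =>
        sub_nonneg.2 (lowerQuantile_le_lowerQuantile_of_mem_Ioc hα.2 hp)))).1 ?_
    change ∫⁻ p in Ioc 0 α, ENNReal.ofReal (lowerQuantile ν α - lowerQuantile ν p) ≠ ⊤
    rw [setLIntegral_ofReal_lowerQuantile_sub_eq hα]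
    exact ((integrable_const _).sub hν).lintegral_lt_top.ne
  exact ((integrable_const (lowerQuantile ν α)).sub hsub).congr (ae_of_all _ fun p => by simp)

lemma setIntegral_sub_lowerQuantile (hν : Integrable id ν) (hα : α ∈ Ioo 0 1) (ψ : ℝ) :
    ∫ p in Ioc 0 α, (ψ - lowerQuantile ν p) = ψ * α - ∫ p in Ioc 0 α, lowerQuantile ν p := by
  rw [integral_sub (integrable_const ψ) (integrableOn_lowerQuantile hν hα), setIntegral_const,
    Real.volume_real_Ioc_of_le hα.1.le, sub_zero, smul_eq_mul, mul_comm]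

lemma mul_sub_setIntegral_lowerQuantile_le (hν : Integrable id ν) (hα : α ∈ Ioo 0 1) (ψ : ℝ) :
    ψ * α - ∫ p in Ioc 0 α, lowerQuantile ν p ≤ ∫ x, max (ψ - x) 0 ∂ν := by
  have hq := integrableOn_lowerQuantile hν hα
  calc ψ * α - ∫ p in Ioc 0 α, lowerQuantile ν p
      = ∫ p in Ioc 0 α, (ψ - lowerQuantile ν p) := (setIntegral_sub_lowerQuantile hν hα ψ).symm
    _ ≤ ∫ p in Ioc 0 α, max (ψ - lowerQuantile ν p) 0 :=
        integral_mono ((integrable_const ψ).sub hq) ((integrable_const ψ).sub hq).pos_part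
          fun p => le_max_left _ _
    _ = (∫⁻ p in Ioc 0 α, ENNReal.ofReal (ψ - lowerQuantile ν p)).toReal :=
        integral_max_sub_zero_eq_toReal _ (aemeasurable_lowerQuantile hα.2) ψ
    _ ≤ (∫⁻ x, ENNReal.ofReal (ψ - x) ∂ν).toReal :=
        ENNReal.toReal_mono ((integrable_const ψ).sub hν).lintegral_lt_top.ne
          (setLIntegral_ofReal_sub_lowerQuantile_le hα.2 ψ)
    _ = ∫ x, max (ψ - x) 0 ∂ν := (integral_max_sub_zero_eq_toReal _ aemeasurable_id' ψ).symm

lemma lowerQuantile_mul_sub_setIntegral_lowerQuantile (hν : Integrable id ν)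
    (hα : α ∈ Ioo 0 1) :
    lowerQuantile ν α * α - ∫ p in Ioc 0 α, lowerQuantile ν p
      = ∫ x, max (lowerQuantile ν α - x) 0 ∂ν := by
  rw [← setIntegral_sub_lowerQuantile hν hα, integral_max_sub_zero_eq_toReal _ aemeasurable_id',
    ← setLIntegral_ofReal_lowerQuantile_sub_eq hα,
    ← integral_max_sub_zero_eq_toReal _ (aemeasurable_lowerQuantile hα.2)]
  refine setIntegral_congr_fun measurableSet_Ioc fun p hp => ?_
  exact (max_eq_left (sub_nonneg.2 (lowerQuantile_le_lowerQuantile_of_mem_Ioc hα.2 hp))).symm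

theorem isGLB_range_neg_add_integral_max_sub (hν : Integrable id ν) (hα : α ∈ Ioo 0 1) :
    IsGLB (range fun ψ : ℝ => -ψ + (1 / α) * ∫ x, max (ψ - x) 0 ∂ν)
      (-(1 / α) * ∫ p in Ioc 0 α, lowerQuantile ν p) := by
  have hα₀ : α ≠ 0 := hα.1.ne'
  refine IsLeast.isGLB ⟨⟨lowerQuantile ν α, ?_⟩, forall_mem_range.2 fun ψ => ?_⟩
  · beta_reduce
    rw [← lowerQuantile_mul_sub_setIntegral_lowerQuantile hν hα]
    field_simp
    ring
  · rw [← sub_nonneg]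
    convert mul_nonneg (one_div_pos.2 hα.1).le
      (sub_nonneg.2 (mul_sub_setIntegral_lowerQuantile_le hν hα ψ)) using 1
    field_simp
    ring

end ProbabilityTheory

/-- The infimum of the Pflug–Rockafellar–Uryasev function equals the
Expected Shortfall ES_α(X) = -(1/α)∫_0^α F_X^←(p) dp. -/
theorem stmt_3 {Ω : Type*} [MeasurableSpace Ω] (μ : Measure Ω) [IsProbabilityMeasure μ]
    (X : Ω → ℝ) (hX : Integrable X μ) (α : ℝ) (hα : α ∈ Set.Ioo (0 : ℝ) 1) :
    IsGLB (Set.range fun ψ : ℝ => -ψ + (1 / α) * ∫ ω, max (ψ - X ω) 0 ∂μ)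
      (-(1 / α) * ∫ p in (0 : ℝ)..α, sInf {x | p ≤ (μ {ω | X ω ≤ x}).toReal}) := by
  have hXm := hX.aemeasurable
  have := Measure.isProbabilityMeasure_map (μ := μ) hXm
  have hcdf (x : ℝ) : (μ {ω | X ω ≤ x}).toReal = cdf (μ.map X) x := by
    rw [cdf_eq_real, measureReal_def, Measure.map_apply_of_aemeasurable hXm measurableSet_Iic]
    rfl
  have hGLB := isGLB_range_neg_add_integral_max_sub ((integrable_map_measure
    aestronglyMeasurable_id hXm).2 hX) hα
  have hmap (ψ : ℝ) : ∫ x, max (ψ - x) 0 ∂(μ.map X) = ∫ ω, max (ψ - X ω) 0 ∂μ :=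
    integral_map hXm (by fun_prop)
  simp_rw [hmap] at hGLB
  simp_rw [intervalIntegral.integral_of_le hα.1.le, hcdf]
  exact hGLB
end

section
/- Let X be an integrable real random variable, α ∈ (0,1), and let ψ ∈ [x_α, x^α] where x_α, x^α are the lower and upper α-quantiles. Then -ψ + (1/α)·E[max(ψ - X, 0)] = -(1/α)·E[X·1_{X ≤ ψ}] - ψ·(1 - F_X(ψ)/α), and this value is the same for all ψ in [x_α, x^α]. -/
/-! Integrating the pointwise split `(ψ - x)⁺ = (ψ - x)·1_{x ≤ ψ}` gives the explicit formula.
For the constancy, Fubini gives `E[(b - X)⁺] - E[(a - X)⁺] = ∫_a^b F`, and `F ≡ α` strictly between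
the two quantiles, so `ψ ↦ E[(ψ - X)⁺]` has slope `α` on `[x_α, x^α]` and the `-ψ` cancels it. -/

open MeasureTheory ProbabilityTheory Set Filter Topology

lemma max_sub_zero_sub_max_sub_zero {a b : ℝ} (hab : a ≤ b) (x : ℝ) :
    max (b - x) 0 - max (a - x) 0 = max (b - max a x) 0 := by
  rcases le_total x a with h | h <;> rcases le_total x b with h' | h' <;> grind

lemma Monotone.apply_eq_of_mem_Ioo_quantiles {f : ℝ → ℝ} (hf : Monotone f)
    (hbot : Tendsto f atBot (𝓝 0)) (htop : Tendsto f atTop (𝓝 1)) {α : ℝ} (hα : α ∈ Ioo 0 1)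
    {t : ℝ} (ht : t ∈ Ioo (sInf {x | α ≤ f x}) (sInf {x | α < f x})) : f t = α := by
  have hne : {x | α ≤ f x}.Nonempty :=
    ((htop.eventually (eventually_gt_nhds hα.2)).exists).imp fun _ => le_of_lt
  have hbdd : BddBelow {x | α < f x} := by
    obtain ⟨M, hM⟩ := eventually_atBot.mp (hbot.eventually (eventually_lt_nhds hα.1))
    exact ⟨M, fun x hx => le_of_not_ge fun hxM => (hM x hxM).not_gt hx⟩
  obtain ⟨s, hs, hst⟩ := exists_lt_of_csInf_lt hne ht.1
  exact le_antisymm (not_lt.mp fun h => (csInf_le hbdd h).not_gt ht.2) (hs.trans (hf hst.le))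

section

variable {Ω : Type*} [MeasurableSpace Ω] {μ : Measure Ω}

lemma integral_indicator_one₀ {s : Set Ω} (hs : NullMeasurableSet s μ) :
    ∫ ω, s.indicator 1 ω ∂μ = μ.real s := by
  rw [integral_indicator₀ hs, Pi.one_def, setIntegral_const, smul_eq_mul, mul_one]

variable {X : Ω → ℝ}

lemma cdf_map_eq_measureReal [IsProbabilityMeasure μ] (hX : AEMeasurable X μ) (x : ℝ) :
    cdf (μ.map X) x = μ.real {ω | X ω ≤ x} := by
  have := Measure.isProbabilityMeasure_map (μ := μ) hX
  rw [cdf_eq_real, measureReal_def, measureReal_def,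
    Measure.map_apply_of_aemeasurable hX measurableSet_Iic]
  rfl

lemma integral_max_sub_zero [IsFiniteMeasure μ] (hX : Integrable X μ) (c : ℝ) :
    ∫ ω, max (c - X ω) 0 ∂μ
      = c * μ.real {ω | X ω ≤ c} - ∫ ω, (if X ω ≤ c then X ω else 0) ∂μ := by
  have hs : NullMeasurableSet {ω | X ω ≤ c} μ :=
    nullMeasurableSet_le hX.aemeasurable aemeasurable_const
  have hsplit : (fun ω => max (c - X ω) 0)
      = fun ω => {ω | X ω ≤ c}.indicator (fun _ => c) ω - {ω | X ω ≤ c}.indicator X ω := by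
    funext ω
    by_cases h : X ω ≤ c
    · simp [h]
    · simp [h, (not_le.mp h).le]
  have hif : (fun ω => if X ω ≤ c then X ω else 0) = {ω | X ω ≤ c}.indicator X := by
    funext ω; simp [indicator_apply]
  rw [hsplit, hif, integral_sub ((integrable_const c).indicator₀ hs) (hX.indicator₀ hs),
    integral_indicator₀ hs, setIntegral_const, smul_eq_mul, mul_comm]

lemma integral_max_sub_zero_sub_eq_setIntegral_measureReal [IsFiniteMeasure μ]
    (hX : Integrable X μ) {a b : ℝ} (hab : a ≤ b) :
    ∫ ω, max (b - X ω) 0 ∂μ - ∫ ω, max (a - X ω) 0 ∂μ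
      = ∫ t in Icc a b, μ.real {ω | X ω ≤ t} := by
  have hint : ∀ c : ℝ, Integrable (fun ω => max (c - X ω) 0) μ := fun c =>
    ((integrable_const c).sub hX).pos_part
  let g : Ω → ℝ → ℝ := fun ω t => (Ici (X ω)).indicator 1 t
  have hg : Function.uncurry g = {p : Ω × ℝ | X p.1 ≤ p.2}.indicator 1 := by
    funext p; simp [g, Function.uncurry, indicator_apply]
  have hgint : Integrable (Function.uncurry g) (μ.prod (volume.restrict (Icc a b))) := by
    rw [hg]
    exact (integrable_const 1).indicator₀
      (hX.aestronglyMeasurable.comp_fst.nullMeasurableSet_le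
        measurable_snd.aestronglyMeasurable)
  have hinner_t : ∀ ω, ∫ t in Icc a b, g ω t = max (b - X ω) 0 - max (a - X ω) 0 := by
    intro ω
    have hIcc : Ici (X ω) ∩ Icc a b = Icc (max a (X ω)) b := by
      ext t; simp only [mem_inter_iff, mem_Ici, mem_Icc, sup_le_iff]; tauto
    rw [integral_indicator_one measurableSet_Ici, measureReal_restrict_apply measurableSet_Ici,
      hIcc, Real.volume_real_Icc, max_sub_zero_sub_max_sub_zero hab]
  have hinner_ω : ∀ t, ∫ ω, g ω t ∂μ = μ.real {ω | X ω ≤ t} := by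
    intro t
    have hs : NullMeasurableSet {ω | X ω ≤ t} μ :=
      nullMeasurableSet_le hX.aemeasurable aemeasurable_const
    simpa [g, indicator_apply] using integral_indicator_one₀ hs
  rw [← integral_sub (hint b) (hint a)]
  simp_rw [← hinner_t, ← hinner_ω]
  exact integral_integral_swap hgint

lemma integral_max_sub_zero_sub_eq_mul [IsFiniteMeasure μ] (hX : Integrable X μ) {a b α : ℝ}
    (hab : a ≤ b) (hF : ∀ t ∈ Ioo a b, μ.real {ω | X ω ≤ t} = α) :
    ∫ ω, max (b - X ω) 0 ∂μ - ∫ ω, max (a - X ω) 0 ∂μ = α * (b - a) := by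
  rw [integral_max_sub_zero_sub_eq_setIntegral_measureReal hX hab, integral_Icc_eq_integral_Ioo,
    setIntegral_congr_fun measurableSet_Ioo hF, setIntegral_const, Real.volume_real_Ioo_of_le hab,
    smul_eq_mul, mul_comm]

end

/-- For ψ between the lower and upper α-quantiles, the PRU function has the explicit
form -(1/α)E[X·1_{X≤ψ}] - ψ(1 - F(ψ)/α), and its value is constant on that interval. -/
theorem stmt_4 {Ω : Type*} [MeasurableSpace Ω] (μ : Measure Ω) [IsProbabilityMeasure μ]
    (X : Ω → ℝ) (hX : Integrable X μ) (α : ℝ) (hα : α ∈ Set.Ioo (0 : ℝ) 1)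
    (F : ℝ → ℝ) (hF : ∀ x, F x = (μ {ω | X ω ≤ x}).toReal)
    (xlow xup : ℝ) (hxlow : xlow = sInf {x | α ≤ F x}) (hxup : xup = sInf {x | α < F x})
    (Γ : ℝ → ℝ) (hΓ : ∀ ψ', Γ ψ' = -ψ' + (1 / α) * ∫ ω, max (ψ' - X ω) 0 ∂μ)
    (ψ : ℝ) (hψ : ψ ∈ Set.Icc xlow xup) :
    (-ψ + (1 / α) * ∫ ω, max (ψ - X ω) 0 ∂μ
        = -(1 / α) * (∫ ω, (if X ω ≤ ψ then X ω else 0) ∂μ) - ψ * (1 - F ψ / α)) ∧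
    (∀ ψ' ∈ Set.Icc xlow xup, Γ ψ = Γ ψ') := by
  have hα_ne : α ≠ 0 := hα.1.ne'
  have hF_cdf : F = cdf (μ.map X) := funext fun x => by
    rw [hF, cdf_map_eq_measureReal hX.aemeasurable, measureReal_def]
  have hF_eq : ∀ t ∈ Ioo xlow xup, μ.real {ω | X ω ≤ t} = α := fun t ht => by
    rw [← cdf_map_eq_measureReal hX.aemeasurable]
    subst hxlow hxup hF_cdf
    exact (monotone_cdf _).apply_eq_of_mem_Ioo_quantiles (tendsto_cdf_atBot _)
      (tendsto_cdf_atTop _) hα ht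
  have hΓ_eq : ∀ c ∈ Icc xlow xup, Γ c = Γ xlow := fun c hc => by
    have := integral_max_sub_zero_sub_eq_mul hX hc.1 fun t ht =>
      hF_eq t ⟨ht.1, ht.2.trans_le hc.2⟩
    rw [hΓ, hΓ]
    field_simp
    linarith
  refine ⟨?_, fun ψ' hψ' => by rw [hΓ_eq ψ hψ, hΓ_eq ψ' hψ']⟩
  rw [integral_max_sub_zero hX, hF, ← measureReal_def]
  field_simp
  ring
end

section
/- Let φ_1 ≥ φ_2 ≥ ... ≥ φ_N ≥ 0 with ∑_i φ_i = 1, and set Δφ_j = φ_{j+1} - φ_j for j < N and Δφ_N = -φ_N. For any real sample X_1,...,X_N, the function Γ(ψ_1,...,ψ_N) = ∑_{j=1}^N Δφ_j·( j·ψ_j - ∑_{i=1}^N max(ψ_j - X_i, 0) ) attains its infimum over ℝ^N, and the infimum equals -∑_{i=1}^N φ_i·X_{i:N}. -/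
open Finset

/-- The auxiliary function Γ(ψ) = ∑_j Δφ_j (j ψ_j - ∑_i max(ψ_j - X_i, 0)) attains its
infimum over ℝ^N, and the infimum equals the empirical spectral measure -∑ φ_i X_{i:N}. -/
theorem stmt_5 (N : ℕ) (φ : Fin N → ℝ)
    (hmono : ∀ i j : Fin N, i ≤ j → φ j ≤ φ i)
    (hpos : ∀ i, 0 ≤ φ i) (hsum : ∑ i, φ i = 1)
    (X : Fin N → ℝ) (Δ : Fin N → ℝ)
    (hΔ : ∀ j : Fin N,
      Δ j = if h : (j : ℕ) + 1 < N then φ ⟨(j : ℕ) + 1, h⟩ - φ j else -φ j) :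
    IsLeast
      (Set.range fun ψ : Fin N → ℝ =>
        ∑ j, Δ j * (((j : ℕ) + 1 : ℝ) * ψ j - ∑ i, max (ψ j - X i) 0))
      (-∑ i, φ i * (X ∘ Tuple.sort X) i) := by
  set σ := Tuple.sort X with hσ
  set Y : Fin N → ℝ := X ∘ σ with hY
  have hYmono : Monotone Y := Tuple.monotone_sort X
  -- extend φ by zero to ℕ
  set Φ : ℕ → ℝ := fun k => if h : k < N then φ ⟨k, h⟩ else 0 with hΦ
  have hΦval : ∀ j : Fin N, Φ (j : ℕ) = φ j := by
    intro j
    simp only [hΦ, j.isLt, dif_pos, Fin.eta]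
  have hΔ' : ∀ j : Fin N, Δ j = Φ ((j : ℕ) + 1) - Φ (j : ℕ) := by
    intro j
    rw [hΔ j, hΦval j]
    by_cases h : (j : ℕ) + 1 < N
    · simp [hΦ, h]
    · simp [hΦ, h]
  have hΔneg : ∀ j : Fin N, Δ j ≤ 0 := by
    intro j
    rw [hΔ j]
    by_cases h : (j : ℕ) + 1 < N
    · rw [dif_pos h]
      have : φ (⟨(j : ℕ) + 1, h⟩ : Fin N) ≤ φ j := by
        apply hmono
        simp [Fin.le_def]
      linarith
    · rw [dif_neg h]
      linarith [hpos j]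
  -- key telescoping identity
  have hIci : ∀ i : Fin N, ∑ j ∈ Finset.Ici i, Δ j = -φ i := by
    intro i
    have h1 : ∑ j ∈ Finset.Ici i, Δ j = ∑ j : Fin N, if i ≤ j then Δ j else 0 := by
      have he : Finset.Ici i = Finset.univ.filter (fun j => i ≤ j) := by ext j; simp
      rw [he, Finset.sum_filter]
    have h2 : (∑ j : Fin N, if i ≤ j then Δ j else 0)
        = ∑ k ∈ range N, if (i : ℕ) ≤ k then Φ (k + 1) - Φ k else 0 := by
      rw [← Fin.sum_univ_eq_sum_range (fun k => if (i : ℕ) ≤ k then Φ (k + 1) - Φ k else 0) N]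
      refine Finset.sum_congr rfl fun j _ => ?_
      simp only [hΔ' j, Fin.le_def]
    have h3 : (∑ k ∈ range N, if (i : ℕ) ≤ k then Φ (k + 1) - Φ k else 0)
        = ∑ k ∈ Finset.Ico (i : ℕ) N, (Φ (k + 1) - Φ k) := by
      have he : Finset.Ico (i : ℕ) N = (range N).filter (fun k => (i : ℕ) ≤ k) := by
        ext k; simp [and_comm]
      rw [he, Finset.sum_filter]
    have h4 : ∑ k ∈ Finset.Ico (i : ℕ) N, (Φ (k + 1) - Φ k) = Φ N - Φ (i : ℕ) := by
      rw [Finset.sum_Ico_eq_sub _ (le_of_lt i.isLt), Finset.sum_range_sub Φ,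
        Finset.sum_range_sub Φ]
      ring
    have hΦN : Φ N = 0 := by simp [hΦ]
    rw [h1, h2, h3, h4, hΦN, hΦval i]
    ring
  -- per-index upper bound on g_j
  have hg_le : ∀ (j : Fin N) (t : ℝ),
      (((j : ℕ) + 1 : ℝ)) * t - ∑ i, max (t - X i) 0 ≤ ∑ i ∈ Finset.Iic j, Y i := by
    intro j t
    have hperm : ∑ i, max (t - X i) 0 = ∑ i, max (t - Y i) 0 :=
      (Equiv.sum_comp σ (fun i => max (t - X i) 0)).symm
    have hsub : ∑ i ∈ Finset.Iic j, max (t - Y i) 0 ≤ ∑ i, max (t - Y i) 0 := by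
      apply Finset.sum_le_sum_of_subset_of_nonneg (Finset.subset_univ _)
      intro i _ _
      exact le_max_right _ _
    have hlb : ∑ i ∈ Finset.Iic j, (t - Y i) ≤ ∑ i ∈ Finset.Iic j, max (t - Y i) 0 :=
      Finset.sum_le_sum fun i _ => le_max_left _ _
    have hcard : ∑ i ∈ Finset.Iic j, (t - Y i)
        = (((j : ℕ) + 1 : ℝ)) * t - ∑ i ∈ Finset.Iic j, Y i := by
      rw [Finset.sum_sub_distrib, Finset.sum_const, Fin.card_Iic]
      push_cast
      ring
    rw [hperm]
    linarith
  -- equality at ψ = Y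
  have hg_eq : ∀ j : Fin N,
      (((j : ℕ) + 1 : ℝ)) * Y j - ∑ i, max (Y j - X i) 0 = ∑ i ∈ Finset.Iic j, Y i := by
    intro j
    have hperm : ∑ i, max (Y j - X i) 0 = ∑ i, max (Y j - Y i) 0 :=
      (Equiv.sum_comp σ (fun i => max (Y j - X i) 0)).symm
    have hsplit : ∑ i, max (Y j - Y i) 0
        = ∑ i ∈ Finset.Iic j, max (Y j - Y i) 0 + ∑ i ∈ (Finset.Iic j)ᶜ, max (Y j - Y i) 0 :=
      (Finset.sum_add_sum_compl _ _).symm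
    have h1 : ∑ i ∈ Finset.Iic j, max (Y j - Y i) 0 = ∑ i ∈ Finset.Iic j, (Y j - Y i) := by
      refine Finset.sum_congr rfl fun i hi => ?_
      rw [Finset.mem_Iic] at hi
      have := hYmono hi
      rw [max_eq_left]
      linarith
    have h2 : ∑ i ∈ (Finset.Iic j)ᶜ, max (Y j - Y i) 0 = 0 := by
      apply Finset.sum_eq_zero
      intro i hi
      rw [Finset.mem_compl, Finset.mem_Iic] at hi
      have hji : j ≤ i := le_of_lt (lt_of_not_ge hi)
      have := hYmono hji
      rw [max_eq_right]
      linarith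
    have hcard : ∑ i ∈ Finset.Iic j, (Y j - Y i)
        = (((j : ℕ) + 1 : ℝ)) * Y j - ∑ i ∈ Finset.Iic j, Y i := by
      rw [Finset.sum_sub_distrib, Finset.sum_const, Fin.card_Iic]
      push_cast
      ring
    rw [hperm, hsplit, h1, h2, hcard]
    ring
  -- Abel summation
  have habel : ∑ j, Δ j * ∑ i ∈ Finset.Iic j, Y i = -∑ i, φ i * Y i := by
    have step1 : ∀ j : Fin N, Δ j * ∑ i ∈ Finset.Iic j, Y i
        = ∑ i : Fin N, if i ≤ j then Δ j * Y i else 0 := by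
      intro j
      rw [Finset.mul_sum]
      have he : Finset.Iic j = Finset.univ.filter (fun i => i ≤ j) := by ext i; simp
      rw [he, Finset.sum_filter]
    calc ∑ j, Δ j * ∑ i ∈ Finset.Iic j, Y i
        = ∑ j : Fin N, ∑ i : Fin N, if i ≤ j then Δ j * Y i else 0 :=
          Finset.sum_congr rfl fun j _ => step1 j
      _ = ∑ i : Fin N, ∑ j : Fin N, if i ≤ j then Δ j * Y i else 0 := Finset.sum_comm
      _ = ∑ i : Fin N, (∑ j ∈ Finset.Ici i, Δ j) * Y i := by
          refine Finset.sum_congr rfl fun i _ => ?_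
          rw [Finset.sum_mul]
          have he : Finset.Ici i = Finset.univ.filter (fun j => i ≤ j) := by ext j; simp
          rw [he, Finset.sum_filter]
      _ = ∑ i : Fin N, -(φ i * Y i) := by
          refine Finset.sum_congr rfl fun i _ => ?_
          rw [hIci i]; ring
      _ = -∑ i, φ i * Y i := by rw [Finset.sum_neg_distrib]
  constructor
  · refine ⟨Y, ?_⟩
    simp only
    rw [← habel]
    exact Finset.sum_congr rfl fun j _ => by rw [hg_eq j]
  · rintro v ⟨ψ, rfl⟩
    simp only
    rw [← habel]
    exact Finset.sum_le_sum fun j _ => mul_le_mul_of_nonpos_left (hg_le j (ψ j)) (hΔneg j)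
end

section
/- With the hypotheses of the discrete spectral representation (φ_1 ≥ ... ≥ φ_N ≥ 0, ∑φ_i = 1, Δφ_j as above), any vector (ψ_1*,...,ψ_N*) with ψ_k* ∈ [X_{k:N}, X_{k+1:N}] for each k with Δφ_k ≠ 0 (and ψ_k* arbitrary when Δφ_k = 0, taking X_{N+1:N} = +∞) is a minimizer of Γ(ψ_1,...,ψ_N) = ∑_{j=1}^N Δφ_j·( j·ψ_j - ∑_{i=1}^N max(ψ_j - X_i, 0) ). -/
open Finset

lemma aux_max (N : ℕ) (Y : Fin N → ℝ) (hY : Monotone Y) (j : Fin N) (s t : ℝ)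
    (hs1 : Y j ≤ s) (hs2 : ∀ h : (j : ℕ) + 1 < N, s ≤ Y ⟨(j : ℕ) + 1, h⟩) :
    ((j : ℕ) + 1 : ℝ) * t - ∑ i, max (t - Y i) 0 ≤
      ((j : ℕ) + 1 : ℝ) * s - ∑ i, max (s - Y i) 0 := by
  have hcard : (Finset.Iic j).card = (j : ℕ) + 1 := Fin.card_Iic j
  rcases le_total t s with hts | hst
  · -- show ∑ (max(s-Yi)0 - max(t-Yi)0) ≤ (j+1)(s-t)
    have key : ∑ i, (max (s - Y i) 0 - max (t - Y i) 0) ≤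
        ∑ i : Fin N, (if i ≤ j then s - t else 0) := by
      apply Finset.sum_le_sum
      intro i _
      by_cases hij : i ≤ j
      · simp only [hij, if_true]
        have h1 : max (s - Y i) 0 ≤ max (t - Y i) 0 + (s - t) := by
          rcases le_total (s - Y i) 0 with h | h
          · have : (0:ℝ) ≤ max (t - Y i) 0 := le_max_right _ _
            simp [max_eq_right h]; linarith
          · have : s - Y i ≤ (t - Y i) + (s - t) := by linarith
            calc max (s - Y i) 0 = s - Y i := max_eq_left h
              _ ≤ max (t - Y i) 0 + (s - t) := by
                have := le_max_left (t - Y i) (0:ℝ); linarith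
        linarith
      · simp only [hij, if_false]
        -- i > j, so (i:ℕ) ≥ j+1; need j+1 < N
        have hlt : (j : ℕ) + 1 ≤ (i : ℕ) := by
          have : j < i := lt_of_not_ge hij
          exact Nat.succ_le_of_lt this
        have hN : (j : ℕ) + 1 < N := lt_of_le_of_lt hlt i.isLt
        have : s ≤ Y i := le_trans (hs2 hN) (hY (by exact hlt))
        have h0 : max (s - Y i) 0 = 0 := max_eq_right (by linarith)
        have : (0:ℝ) ≤ max (t - Y i) 0 := le_max_right _ _
        linarith
    have hsum2 : ∑ i : Fin N, (if i ≤ j then s - t else 0) = ((j:ℕ) + 1 : ℝ) * (s - t) := by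
      classical
      rw [Finset.sum_ite, Finset.sum_const, Finset.sum_const, smul_zero, add_zero]
      have hfil : Finset.univ.filter (fun i => i ≤ j) = Finset.Iic j := by
        ext i; simp [Finset.mem_Iic]
      rw [hfil, hcard, nsmul_eq_mul]
      push_cast; ring
    rw [hsum2] at key
    rw [Finset.sum_sub_distrib] at key
    nlinarith [key]
  · -- s ≤ t
    have key : ∑ i : Fin N, (if i ≤ j then t - s else 0) ≤
        ∑ i, (max (t - Y i) 0 - max (s - Y i) 0) := by
      apply Finset.sum_le_sum
      intro i _
      by_cases hij : i ≤ j
      · simp only [hij, if_true]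
        have hYi : Y i ≤ s := le_trans (hY hij) hs1
        rw [max_eq_left (by linarith : (0:ℝ) ≤ t - Y i),
            max_eq_left (by linarith : (0:ℝ) ≤ s - Y i)]
        ring_nf; linarith
      · simp only [hij, if_false]
        have : max (s - Y i) 0 ≤ max (t - Y i) 0 :=
          max_le_max (by linarith) le_rfl
        linarith
    have hsum2 : ∑ i : Fin N, (if i ≤ j then t - s else 0) = ((j:ℕ) + 1 : ℝ) * (t - s) := by
      classical
      rw [Finset.sum_ite, Finset.sum_const, Finset.sum_const, smul_zero, add_zero]
      have hfil : Finset.univ.filter (fun i => i ≤ j) = Finset.Iic j := by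
        ext i; simp [Finset.mem_Iic]
      rw [hfil, hcard, nsmul_eq_mul]
      push_cast; ring
    rw [hsum2] at key
    rw [Finset.sum_sub_distrib] at key
    nlinarith [key]

/-- Any vector ψ* with ψ*_k ∈ [X_{k:N}, X_{k+1:N}] whenever Δφ_k ≠ 0 (with
X_{N+1:N} = +∞, and ψ*_k arbitrary when Δφ_k = 0) minimizes the auxiliary function Γ. -/
theorem stmt_6 (N : ℕ) (φ : Fin N → ℝ)
    (hmono : ∀ i j : Fin N, i ≤ j → φ j ≤ φ i)
    (hpos : ∀ i, 0 ≤ φ i) (hsum : ∑ i, φ i = 1)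
    (X : Fin N → ℝ) (Δ : Fin N → ℝ)
    (hΔ : ∀ j : Fin N,
      Δ j = if h : (j : ℕ) + 1 < N then φ ⟨(j : ℕ) + 1, h⟩ - φ j else -φ j)
    (ψs : Fin N → ℝ)
    (hψs : ∀ k : Fin N, Δ k ≠ 0 →
      (X ∘ Tuple.sort X) k ≤ ψs k ∧
        ∀ h : (k : ℕ) + 1 < N, ψs k ≤ (X ∘ Tuple.sort X) ⟨(k : ℕ) + 1, h⟩) :
    ∀ ψ : Fin N → ℝ,
      ∑ j, Δ j * (((j : ℕ) + 1 : ℝ) * ψs j - ∑ i, max (ψs j - X i) 0) ≤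
        ∑ j, Δ j * (((j : ℕ) + 1 : ℝ) * ψ j - ∑ i, max (ψ j - X i) 0) := by
  intro ψ
  have hΔnonpos : ∀ j : Fin N, Δ j ≤ 0 := by
    intro j
    rw [hΔ j]
    split
    · next h =>
      have := hmono j ⟨(j:ℕ)+1, h⟩ (by simp [Fin.le_def])
      linarith
    · next h => linarith [hpos j]
  apply Finset.sum_le_sum
  intro j _
  by_cases hz : Δ j = 0
  · simp [hz]
  · apply mul_le_mul_of_nonpos_left _ (hΔnonpos j)
    obtain ⟨h1, h2⟩ := hψs j hz
    have heq : ∀ c : ℝ, ∑ i, max (c - X i) 0 = ∑ i, max (c - (X ∘ Tuple.sort X) i) 0 := by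
      intro c
      exact (Equiv.sum_comp (Tuple.sort X) (fun i => max (c - X i) 0)).symm
    rw [heq (ψ j), heq (ψs j)]
    exact aux_max N (X ∘ Tuple.sort X) (Tuple.monotone_sort X) j (ψs j) (ψ j) h1 h2
end

section
/- Let φ_1 ≥ ... ≥ φ_N ≥ 0 with ∑_i φ_i = 1. The empirical spectral measure M_φ^{(N)}(X) = -∑_i φ_i·X_{i:N} equals the infimum over (ψ_1,...,ψ_{N-1}) ∈ ℝ^{N-1} of the sorting-free function ∑_{j=1}^{N-1} (φ_{j+1}-φ_j)·( j·ψ_j - ∑_{i=1}^N max(ψ_j - X_i, 0) ) - φ_N·∑_{i=1}^N X_i, and this infimum is attained. -/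
/-!
For any `t` and any set `s` of `k` indices, `k * t - ∑ i, (t - X i)⁺ ≤ ∑ i ∈ s, X i`, with
equality when `s` consists of the `k` smallest values and `t` separates them from the rest.
Hence the sum of the `k` smallest order statistics is the maximum over `t` of
`k * t - ∑ i, (t - X i)⁺`, attained at `t = X_{k:N}`. Abel summation writes `-∑ φ_i X_{i:N}` as
a combination of these partial sums with the nonpositive weights `φ_{j+1} - φ_j`, so minimising
over `ψ` term by term gives the claim.
-/

open Finset

section

variable {ι : Type*} [Fintype ι]

lemma card_mul_sub_sum_max_sub_le_sum (Y : ι → ℝ) (s : Finset ι) (t : ℝ) :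
    #s * t - ∑ i, max (t - Y i) 0 ≤ ∑ i ∈ s, Y i := by
  have hsub : ∑ i ∈ s, max (t - Y i) 0 ≤ ∑ i, max (t - Y i) 0 :=
    sum_le_univ_sum_of_nonneg fun i => le_max_right _ _
  have hle : #s * t ≤ ∑ i ∈ s, (Y i + max (t - Y i) 0) := by
    rw [← nsmul_eq_mul, ← sum_const]
    exact sum_le_sum fun i _ => by linarith [le_max_left (t - Y i) 0]
  rw [sum_add_distrib] at hle
  linarith

lemma card_mul_sub_sum_max_sub_eq_sum (Y : ι → ℝ) (s : Finset ι) (t : ℝ)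
    (hs : ∀ i ∈ s, Y i ≤ t) (hsc : ∀ i ∉ s, t ≤ Y i) :
    #s * t - ∑ i, max (t - Y i) 0 = ∑ i ∈ s, Y i := by
  classical
  have hmax : ∀ i, max (t - Y i) 0 = if i ∈ s then t - Y i else 0 := fun i => by
    split_ifs with hi
    · exact max_eq_left (sub_nonneg.2 (hs i hi))
    · exact max_eq_right (sub_nonpos.2 (hsc i hi))
  rw [sum_congr rfl fun i _ => hmax i, sum_ite_mem, univ_inter, sum_sub_distrib, sum_const,
    nsmul_eq_mul]
  ring

end

lemma Monotone.card_Iic_mul_sub_sum_max_sub_eq_sum_Iic {α : Type*} [Fintype α] [LinearOrder α]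
    [LocallyFiniteOrderBot α] {Y : α → ℝ} (hY : Monotone Y) (a : α) :
    #(Iic a) * Y a - ∑ i, max (Y a - Y i) 0 = ∑ i ∈ Iic a, Y i :=
  card_mul_sub_sum_max_sub_eq_sum Y _ _ (fun _ hi => hY (mem_Iic.1 hi))
    fun _ hi => hY (not_le.1 (mt mem_Iic.2 hi)).le

lemma neg_sum_mul_eq_sum_sub_mul_sum_Iic {N : ℕ} (hN : 0 < N) (φ Y : Fin N → ℝ) :
    -∑ i, φ i * Y i =
      ∑ j : Fin (N - 1),
          (φ ⟨j + 1, Nat.add_lt_of_lt_sub j.isLt⟩ - φ ⟨j, Nat.lt_of_lt_pred j.isLt⟩) *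
            ∑ i ∈ Iic (⟨j, Nat.lt_of_lt_pred j.isLt⟩ : Fin N), Y i
        - φ ⟨N - 1, Nat.sub_one_lt_of_lt hN⟩ * ∑ i, Y i := by
  have hext (F : Fin N → ℝ) : ∃ f : ℕ → ℝ, ∀ i : Fin N, F i = f i :=
    ⟨fun m => if h : m < N then F ⟨m, h⟩ else 0, fun i => by simp⟩
  obtain ⟨f, hf⟩ := hext φ
  obtain ⟨g, hg⟩ := hext Y
  have hrange (F : Fin N → ℝ) (G : ℕ → ℝ) (hFG : ∀ i : Fin N, F i = G i) :
      ∑ i, F i = ∑ m ∈ range N, G m := by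
    simp only [hFG, Fin.sum_univ_eq_sum_range G]
  have hIic (a : Fin N) : ∑ i ∈ Iic a, Y i = ∑ m ∈ range (a + 1), g m := by
    rw [Nat.range_succ_eq_Iic, ← Fin.map_valEmbedding_Iic, sum_map]
    simp [hg]
  have hparts := sum_range_by_parts f g N
  simp only [smul_eq_mul] at hparts
  rw [hrange _ (fun m => f m * g m) (by simp [hf, hg]), hrange Y g hg, hparts]
  simp only [hf, hIic]
  rw [Fin.sum_univ_eq_sum_range (fun m => (f (m + 1) - f m) * ∑ i ∈ range (m + 1), g i)]
  ring

/-- The empirical spectral measure equals the attained infimum over ψ ∈ ℝ^{N-1} of the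
reduced sorting-free auxiliary function. -/
theorem stmt_9 (N : ℕ) (hN : 0 < N) (φ : Fin N → ℝ)
    (hmono : ∀ i j : Fin N, i ≤ j → φ j ≤ φ i)
    (X : Fin N → ℝ) :
    IsLeast
      (Set.range fun ψ : Fin (N - 1) → ℝ =>
        (∑ j : Fin (N - 1),
          (φ ⟨(j : ℕ) + 1, by have := j.isLt; omega⟩ - φ ⟨(j : ℕ), by have := j.isLt; omega⟩) *
            (((j : ℕ) + 1 : ℝ) * ψ j - ∑ i, max (ψ j - X i) 0))
          - φ ⟨N - 1, by omega⟩ * ∑ i, X i)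
      (-∑ i, φ i * (X ∘ Tuple.sort X) i) := by
  set Y := X ∘ Tuple.sort X
  have hsumY : ∑ i, X i = ∑ i, Y i := (Equiv.sum_comp _ X).symm
  have hmaxY (t : ℝ) : ∑ i, max (t - X i) 0 = ∑ i, max (t - Y i) 0 :=
    (Equiv.sum_comp (Tuple.sort X) fun i => max (t - X i) 0).symm
  simp only [hsumY, hmaxY, neg_sum_mul_eq_sum_sub_mul_sum_Iic hN φ Y]
  refine ⟨⟨fun j => Y ⟨j, by omega⟩, ?_⟩, ?_⟩
  · congr! with j
    simpa only [Fin.card_Iic, Nat.cast_add, Nat.cast_one] using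
      (Tuple.monotone_sort X).card_Iic_mul_sub_sum_max_sub_eq_sum_Iic ⟨j, by omega⟩
  · rintro _ ⟨ψ, rfl⟩
    refine sub_le_sub_right (sum_le_sum fun j _ => mul_le_mul_of_nonpos_left ?_ ?_) _
    · simpa only [Fin.card_Iic, Nat.cast_add, Nat.cast_one] using
        card_mul_sub_sum_max_sub_le_sum Y (Iic ⟨j, by omega⟩) (ψ j)
    · exact sub_nonpos.2 (hmono _ _ (Fin.mk_le_mk.2 (Nat.le_succ _)))
end
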